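/- arXiv:2210.05239 — 7 statements merged into one kernel-verified Lean document; each statement's English description precedes it below -/
import Mathlib

section
/- For any two N×N Hermitian matrices X and Y and any nonnegative integers u and v with u+v even, Tr(X^{u+v} Y^2) ≥ Tr(X^u Y X^v Y). -/
open scoped ComplexOrder

lemma key_scalar (u v : ℕ) (huv : Even (u + v)) (a b : ℝ) :
    a ^ u * b ^ v + a ^ v * b ^ u ≤ a ^ (u + v) + b ^ (u + v) := by
  have h : 0 ≤ (a ^ u - b ^ u) * (a ^ v - b ^ v) := by
    rcases Nat.even_or_odd u with hu | hu
    · have hv : Even v := (Nat.even_add.mp huv).mp hu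
      rcases le_total (|a|) (|b|) with hab | hab
      · have h1 : a ^ u ≤ b ^ u := by
          rw [← hu.pow_abs a, ← hu.pow_abs b]; exact pow_le_pow_left₀ (abs_nonneg a) hab u
        have h2 : a ^ v ≤ b ^ v := by
          rw [← hv.pow_abs a, ← hv.pow_abs b]; exact pow_le_pow_left₀ (abs_nonneg a) hab v
        nlinarith [h1, h2]
      · have h1 : b ^ u ≤ a ^ u := by
          rw [← hu.pow_abs a, ← hu.pow_abs b]; exact pow_le_pow_left₀ (abs_nonneg b) hab u
        have h2 : b ^ v ≤ a ^ v := by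
          rw [← hv.pow_abs a, ← hv.pow_abs b]; exact pow_le_pow_left₀ (abs_nonneg b) hab v
        exact mul_nonneg (sub_nonneg.2 h1) (sub_nonneg.2 h2)
    · have hv : Odd v := by
        rcases Nat.even_or_odd v with h' | h'
        · exact absurd ((Nat.even_add.mp huv).mpr h') (Nat.not_even_iff_odd.mpr hu)
        · exact h'
      rcases le_total a b with hab | hab
      · have h1 : a ^ u ≤ b ^ u := hu.strictMono_pow.monotone hab
        have h2 : a ^ v ≤ b ^ v := hv.strictMono_pow.monotone hab
        nlinarith [h1, h2]
      · have h1 : b ^ u ≤ a ^ u := hu.strictMono_pow.monotone hab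
        have h2 : b ^ v ≤ a ^ v := hv.strictMono_pow.monotone hab
        exact mul_nonneg (sub_nonneg.2 h1) (sub_nonneg.2 h2)
  have e : (a ^ u - b ^ u) * (a ^ v - b ^ v)
      = a ^ (u + v) + b ^ (u + v) - (a ^ u * b ^ v + a ^ v * b ^ u) := by
    rw [pow_add, pow_add]; ring
  linarith [e ▸ h]

lemma key_sum (N : ℕ) (lam : Fin N → ℝ) (c : Fin N → Fin N → ℝ)
    (hc : ∀ i j, 0 ≤ c i j) (hsymm : ∀ i j, c i j = c j i)
    (u v : ℕ) (huv : Even (u + v)) :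
    ∑ i, ∑ j, lam i ^ u * lam j ^ v * c i j ≤ ∑ i, ∑ j, lam i ^ (u + v) * c i j := by
  have swapL : ∑ i, ∑ j, lam i ^ u * lam j ^ v * c i j
      = ∑ i, ∑ j, lam j ^ u * lam i ^ v * c i j := by
    rw [Finset.sum_comm]
    exact Finset.sum_congr rfl fun i _ => Finset.sum_congr rfl fun j _ => by rw [hsymm j i]
  have swapR : ∑ i, ∑ j, lam i ^ (u + v) * c i j
      = ∑ i, ∑ j, lam j ^ (u + v) * c i j := by
    rw [Finset.sum_comm]
    exact Finset.sum_congr rfl fun i _ => Finset.sum_congr rfl fun j _ => by rw [hsymm j i]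
  have h2 : ∑ i, ∑ j, (lam i ^ u * lam j ^ v * c i j + lam j ^ u * lam i ^ v * c i j)
      ≤ ∑ i, ∑ j, (lam i ^ (u + v) * c i j + lam j ^ (u + v) * c i j) := by
    refine Finset.sum_le_sum fun i _ => Finset.sum_le_sum fun j _ => ?_
    have := key_scalar u v huv (lam i) (lam j)
    nlinarith [hc i j, this]
  simp only [Finset.sum_add_distrib] at h2
  linarith [swapL, swapR, h2]

/-- For any two N×N Hermitian matrices X and Y and any nonnegative integers u and v
with u+v even, Tr(X^{u+v} Y²) ≥ Tr(X^u Y X^v Y). -/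
theorem stmt0 (N : ℕ) (X Y : Matrix (Fin N) (Fin N) ℂ)
    (hX : X.IsHermitian) (hY : Y.IsHermitian) (u v : ℕ) (huv : Even (u + v)) :
    (X ^ u * Y * X ^ v * Y).trace ≤ (X ^ (u + v) * Y ^ 2).trace := by
  set U : Matrix (Fin N) (Fin N) ℂ := (hX.eigenvectorUnitary : Matrix (Fin N) (Fin N) ℂ)
  set lam : Fin N → ℝ := hX.eigenvalues
  set D : Matrix (Fin N) (Fin N) ℂ := Matrix.diagonal (fun i => (lam i : ℂ))
  have h1 : star U * U = 1 := (Matrix.mem_unitaryGroup_iff').mp hX.eigenvectorUnitary.2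
  have h2 : U * star U = 1 := (Matrix.mem_unitaryGroup_iff).mp hX.eigenvectorUnitary.2
  have hXeq : X = U * D * star U := hX.spectral_theorem
  set B : Matrix (Fin N) (Fin N) ℂ := star U * Y * U with hB
  have hBH : B.IsHermitian := by
    rw [hB, Matrix.star_eq_conjTranspose]
    exact Matrix.isHermitian_conjTranspose_mul_mul U hY
  have hXpow : ∀ k : ℕ, X ^ k = U * D ^ k * star U := by
    intro k
    induction k with
    | zero => simp [h2]
    | succ k ih =>
        rw [pow_succ, pow_succ, ih, hXeq]
        calc U * D ^ k * star U * (U * D * star U)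
            = U * D ^ k * (star U * U) * D * star U := by
              simp only [Matrix.mul_assoc]
          _ = U * (D ^ k * D) * star U := by rw [h1]; simp only [Matrix.mul_assoc, Matrix.one_mul]
  have traceConj : ∀ M : Matrix (Fin N) (Fin N) ℂ, (U * M * star U).trace = M.trace := by
    intro M
    rw [Matrix.trace_mul_comm, ← Matrix.mul_assoc, h1, Matrix.one_mul]
  have idL : X ^ u * Y * X ^ v * Y = U * (D ^ u * B * D ^ v * B) * star U := by
    rw [hXpow u, hXpow v, hB]
    simp only [Matrix.mul_assoc]
    rw [h2, Matrix.mul_one]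
  have idR : X ^ (u + v) * Y ^ 2 = U * (D ^ (u + v) * B * B) * star U := by
    rw [hXpow (u + v), hB, sq]
    simp only [Matrix.mul_assoc]
    rw [h2, Matrix.mul_one, ← Matrix.mul_assoc U (star U) Y, h2, Matrix.one_mul]
  set c : Fin N → Fin N → ℝ := fun i j => Complex.normSq (B i j) with hc
  have hBji : ∀ i j, B i j * B j i = (c i j : ℂ) := by
    intro i j
    rw [← hBH.apply j i]
    simpa [hc, Complex.star_def] using Complex.mul_conj (B i j)
  have hDpow : ∀ k : ℕ, D ^ k = Matrix.diagonal (fun i => ((lam i : ℂ)) ^ k) := by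
    intro k; rw [Matrix.diagonal_pow]; rfl
  have hL : (X ^ u * Y * X ^ v * Y).trace
      = ∑ i, ∑ j, ((lam i : ℂ) ^ u * (lam j : ℂ) ^ v * (B i j * B j i)) := by
    rw [idL, traceConj, hDpow, hDpow]
    simp only [Matrix.trace, Matrix.diag, Matrix.mul_apply, Matrix.diagonal_apply, ite_mul,
      mul_ite, zero_mul, mul_zero, Finset.sum_ite_eq, Finset.sum_ite_eq', Finset.mem_univ,
      if_true]
    exact Finset.sum_congr rfl fun i _ => Finset.sum_congr rfl fun j _ => by ring
  have hR : (X ^ (u + v) * Y ^ 2).trace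
      = ∑ i, ∑ j, ((lam i : ℂ) ^ (u + v) * (B i j * B j i)) := by
    rw [idR, traceConj, hDpow]
    simp only [Matrix.trace, Matrix.diag, Matrix.mul_apply, Matrix.diagonal_apply, ite_mul,
      mul_ite, zero_mul, mul_zero, Finset.sum_ite_eq, Finset.sum_ite_eq', Finset.mem_univ,
      if_true]
    exact Finset.sum_congr rfl fun i _ => Finset.sum_congr rfl fun j _ => by ring
  rw [hL, hR]
  simp only [hBji]
  have hcn : ∀ i j, 0 ≤ c i j := fun i j => Complex.normSq_nonneg _
  have hcs : ∀ i j, c i j = c j i := by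
    intro i j
    simp only [hc]
    rw [← hBH.apply j i, Complex.star_def, Complex.normSq_conj]
  exact_mod_cast key_sum N lam c hcn hcs u v huv
end

section
/- For any two N×N Hermitian matrices X and Y with X positive semidefinite, and any nonnegative integers u and v, Tr(X^{u+v} Y^2) ≥ Tr(X^u Y X^v Y). -/
/-!
Diagonalize `X = U D U*` with `D = diag(λ)`, `λ ≥ 0`, and put `B = U* Y U`, again Hermitian.
Both traces are then weighted sums over the symmetric weights `|B_ij|²`:
`Tr(X^u Y X^v Y) = Σ |B_ij|² λ_i^u λ_j^v` and `Tr(X^{u+v} Y²) = Σ |B_ij|² λ_i^u λ_i^v`.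
Twice their difference is `Σ |B_ij|² (λ_i^u - λ_j^u)(λ_i^v - λ_j^v) ≥ 0`, since `λ ↦ λ^u` and
`λ ↦ λ^v` are both monotone on `[0, ∞)` (a weighted Chebyshev sum inequality).
-/

open scoped ComplexOrder
open Matrix Finset

theorem Matrix.trace_conjStarAlgAut {n S R : Type*} [Fintype n] [DecidableEq n]
    [CommSemiring S] [CommSemiring R] [StarRing R] [Algebra S R]
    (U : unitary (Matrix n n R)) (M : Matrix n n R) :
    (Unitary.conjStarAlgAut S _ U M).trace = M.trace := by
  rw [Unitary.conjStarAlgAut_apply, trace_mul_cycle, Unitary.coe_star_mul_self, one_mul]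

theorem Matrix.trace_diagonal_mul_mul_diagonal_mul_conjTranspose {n 𝕜 : Type*} [Fintype n]
    [DecidableEq n] [RCLike 𝕜] (p q : n → 𝕜) (B : Matrix n n 𝕜) :
    (diagonal p * B * diagonal q * Bᴴ).trace = ∑ i, ∑ j, (‖B i j‖ ^ 2 : 𝕜) * (p i * q j) := by
  simp only [trace, diag_apply, mul_apply (M := diagonal p * B * diagonal q), mul_diagonal,
    diagonal_mul, conjTranspose_apply, RCLike.star_def]
  refine sum_congr rfl fun i _ => sum_congr rfl fun j _ => ?_
  rw [← RCLike.mul_conj]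
  ring

theorem Matrix.trace_diagonal_mul_mul_conjTranspose {n 𝕜 : Type*} [Fintype n]
    [DecidableEq n] [RCLike 𝕜] (p : n → 𝕜) (B : Matrix n n 𝕜) :
    (diagonal p * B * Bᴴ).trace = ∑ i, ∑ j, (‖B i j‖ ^ 2 : 𝕜) * p i := by
  simpa using trace_diagonal_mul_mul_diagonal_mul_conjTranspose p 1 B

theorem Monovary.sum_sum_mul_le_sum_sum_mul {ι α : Type*} [Fintype ι] [CommRing α] [LinearOrder α]
    [IsStrictOrderedRing α] {f g : ι → α} (hfg : Monovary f g)
    {c : ι → ι → α} (hc : ∀ i j, 0 ≤ c i j) (hsymm : ∀ i j, c i j = c j i) :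
    ∑ i, ∑ j, c i j * (f i * g j) ≤ ∑ i, ∑ j, c i j * (f i * g i) := by
  have hdouble : 2 * (∑ i, ∑ j, c i j * (f i * g i) - ∑ i, ∑ j, c i j * (f i * g j)) =
      ∑ i, ∑ j, c i j * ((f j - f i) * (g j - g i)) := by
    have hswap : ∑ i, ∑ j, c i j * (f i * (g i - g j)) =
        ∑ i, ∑ j, c i j * (f j * (g j - g i)) := by
      rw [Finset.sum_comm]
      exact sum_congr rfl fun i _ => sum_congr rfl fun j _ => by rw [hsymm]
    simp only [← Finset.sum_sub_distrib, ← mul_sub]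
    rw [two_mul]
    nth_rw 2 [hswap]
    simp only [← Finset.sum_add_distrib, ← mul_add]
    congr! 3
    ring
  have hnonneg : 0 ≤ ∑ i, ∑ j, c i j * ((f j - f i) * (g j - g i)) :=
    sum_nonneg fun i _ => sum_nonneg fun j _ =>
      mul_nonneg (hc i j) (monovary_iff_forall_mul_nonneg.1 hfg i j)
  linarith

theorem monovary_pow_pow {ι α : Type*} [Semiring α] [LinearOrder α] [IsOrderedRing α]
    {e : ι → α} (he : ∀ i, 0 ≤ e i) (u v : ℕ) :
    Monovary (fun i => e i ^ u) (fun i => e i ^ v) := by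
  have h := (pow_left_monotoneOn (n := u)).monovaryOn (pow_left_monotoneOn (n := v)) |>.comp_right e
  simpa [he, Function.comp_def] using h

theorem Matrix.PosSemidef.trace_pow_mul_mul_pow_mul_le {n 𝕜 : Type*} [Fintype n] [DecidableEq n]
    [RCLike 𝕜] {X Y : Matrix n n 𝕜} (hX : X.PosSemidef) (hY : Y.IsHermitian) (u v : ℕ) :
    (X ^ u * Y * X ^ v * Y).trace ≤ (X ^ (u + v) * Y ^ 2).trace := by
  rw [hX.1.spectral_theorem]
  set φ := Unitary.conjStarAlgAut 𝕜 _ hX.1.eigenvectorUnitary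
  obtain ⟨B, rfl⟩ : ∃ B, Y = φ B := ⟨φ.symm Y, (φ.apply_symm_apply Y).symm⟩
  have hB : Bᴴ = B := EquivLike.injective φ <| by
    rw [← star_eq_conjTranspose, map_star, star_eq_conjTranspose, hY.eq]
  simp only [← map_pow, ← map_mul, diagonal_pow]
  rw [trace_conjStarAlgAut, trace_conjStarAlgAut, sq, ← mul_assoc]
  have hlhs := trace_diagonal_mul_mul_diagonal_mul_conjTranspose
    (RCLike.ofReal ∘ hX.1.eigenvalues ^ u) (RCLike.ofReal ∘ hX.1.eigenvalues ^ v) B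
  have hrhs := trace_diagonal_mul_mul_conjTranspose (RCLike.ofReal ∘ hX.1.eigenvalues ^ (u + v)) B
  rw [hB] at hlhs hrhs
  rw [hlhs, hrhs]
  have hsymm (i j : n) : ‖B i j‖ ^ 2 = ‖B j i‖ ^ 2 := by
    rw [← norm_star, ← conjTranspose_apply, hB]
  have hchebyshev := (monovary_pow_pow hX.eigenvalues_nonneg u v).sum_sum_mul_le_sum_sum_mul
    (fun i j => sq_nonneg ‖B i j‖) hsymm
  simp only [Function.comp_apply, Pi.pow_apply, pow_add]
  exact_mod_cast hchebyshev

/-- For any two N×N Hermitian matrices X and Y with X positive semidefinite, and any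
nonnegative integers u and v, Tr(X^{u+v} Y²) ≥ Tr(X^u Y X^v Y). -/
theorem stmt1 (N : ℕ) (X Y : Matrix (Fin N) (Fin N) ℂ)
    (hX : X.PosSemidef) (hY : Y.IsHermitian) (u v : ℕ) :
    (X ^ u * Y * X ^ v * Y).trace ≤ (X ^ (u + v) * Y ^ 2).trace :=
  hX.trace_pow_mul_mul_pow_mul_le hY u v
end

section
/- For N×N Hermitian matrices X₁,…,X_ℓ, setting Z = X₁² + ⋯ + X_ℓ², for every nonnegative integer D and every nonnegative integer k one has Tr(Z^{k+D}) ≤ ℓ^D · Tr(Z^k · (X₁^{2D} + ⋯ + X_ℓ^{2D})). -/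
/-!
Diagonalise `Z = ∑ᵢ Xᵢ²` in an orthonormal eigenbasis `(u_p)` with eigenvalues `μ_p ≥ 0`. Then
`Tr(Z^k M) = ∑_p μ_p^k ⟨u_p, M u_p⟩` for every `M`, so it suffices to prove
`μ_p^D ≤ ℓ^D ∑ᵢ ‖Xᵢ^D u_p‖²` for each `p`. Since `μ_p = ∑ᵢ ‖Xᵢ u_p‖²`, the power-mean inequality
reduces this to `‖X u‖^{2D} ≤ ‖X^D u‖²` for a unit vector `u` and a symmetric `X`, which holds
because `j ↦ ‖X^j u‖²` is log-convex (Cauchy–Schwarz) and equals `1` at `j = 0`.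
-/

open scoped ComplexOrder InnerProductSpace
open Finset

theorem pow_one_le_of_sq_le_mul {R : Type*} [CommRing R] [LinearOrder R] [IsStrictOrderedRing R]
    {c : ℕ → R} (h0 : c 0 = 1) (hc : ∀ j, 0 ≤ c j)
    (hsq : ∀ j, c (j + 1) ^ 2 ≤ c j * c (j + 2)) (n : ℕ) : c 1 ^ n ≤ c n := by
  have step : ∀ j, c 1 * c j ≤ c (j + 1) := by
    intro j
    induction j with
    | zero => simp [h0]
    | succ j ih =>
      rcases (hc (j + 1)).eq_or_lt with hzero | hpos
      · rw [← hzero, mul_zero]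
        exact hc _
      · refine le_of_mul_le_mul_left ?_ hpos
        nlinarith [hsq j, hc 1, hc (j + 2)]
  induction n with
  | zero => simp [h0]
  | succ n ih =>
    calc c 1 ^ (n + 1) = c 1 * c 1 ^ n := pow_succ' _ _
      _ ≤ c 1 * c n := mul_le_mul_of_nonneg_left ih (hc 1)
      _ ≤ c (n + 1) := step n

theorem pow_sum_le_card_pow_mul_sum_pow {ι R : Type*} [Semiring R] [LinearOrder R]
    [IsStrictOrderedRing R] [ExistsAddOfLE R] {s : Finset ι} (hs : s.Nonempty) {f : ι → R}
    (hf : ∀ i ∈ s, 0 ≤ f i) : ∀ n, (∑ i ∈ s, f i) ^ n ≤ (#s : R) ^ n * ∑ i ∈ s, f i ^ n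
  | 0 => by simpa using hs.card_pos
  | n + 1 =>
    calc (∑ i ∈ s, f i) ^ (n + 1) ≤ (#s : R) ^ n * ∑ i ∈ s, f i ^ (n + 1) :=
          pow_sum_le_card_mul_sum_pow hf n
      _ ≤ (#s : R) ^ (n + 1) * ∑ i ∈ s, f i ^ (n + 1) := by
          gcongr
          · exact sum_nonneg fun i hi => pow_nonneg (hf i hi) _
          · exact_mod_cast hs.card_pos
          · omega

namespace LinearMap.IsSymmetric

variable {𝕜 E : Type*} [RCLike 𝕜] [NormedAddCommGroup E] [InnerProductSpace 𝕜 E]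

section Single

variable {T : E →ₗ[𝕜] E}

theorem inner_pow_apply_pow_apply (hT : T.IsSymmetric) (x : E) (a b : ℕ) :
    ⟪(T ^ a) x, (T ^ b) x⟫_𝕜 = ⟪x, (T ^ (a + b)) x⟫_𝕜 := by
  rw [hT.pow a, pow_add, Module.End.mul_apply]

theorem inner_pow_two_mul_apply_self (hT : T.IsSymmetric) (x : E) (n : ℕ) :
    ⟪x, (T ^ (2 * n)) x⟫_𝕜 = (‖(T ^ n) x‖ ^ 2 : ℝ) := by
  rw [two_mul, ← hT.inner_pow_apply_pow_apply, inner_self_eq_norm_sq_to_K, RCLike.ofReal_pow]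

theorem norm_pow_succ_apply_sq_le (hT : T.IsSymmetric) (x : E) (j : ℕ) :
    ‖(T ^ (j + 1)) x‖ ^ 2 ≤ ‖(T ^ j) x‖ * ‖(T ^ (j + 2)) x‖ := by
  have h : ⟪(T ^ (j + 1)) x, (T ^ (j + 1)) x⟫_𝕜 = ⟪(T ^ j) x, (T ^ (j + 2)) x⟫_𝕜 := by
    rw [hT.inner_pow_apply_pow_apply, hT.inner_pow_apply_pow_apply]
    ring_nf
  calc ‖(T ^ (j + 1)) x‖ ^ 2 = RCLike.re ⟪(T ^ j) x, (T ^ (j + 2)) x⟫_𝕜 := by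
        rw [← h, inner_self_eq_norm_sq]
    _ ≤ ‖⟪(T ^ j) x, (T ^ (j + 2)) x⟫_𝕜‖ := RCLike.re_le_norm _
    _ ≤ ‖(T ^ j) x‖ * ‖(T ^ (j + 2)) x‖ := norm_inner_le_norm _ _

theorem norm_apply_sq_pow_le (hT : T.IsSymmetric) {x : E} (hx : ‖x‖ = 1) (n : ℕ) :
    (‖T x‖ ^ 2) ^ n ≤ ‖(T ^ n) x‖ ^ 2 := by
  have h := pow_one_le_of_sq_le_mul (c := fun j => ‖(T ^ j) x‖ ^ 2) (by simp [hx])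
    (fun j => by positivity) (fun j => by
      simpa only [← pow_mul, mul_pow] using pow_le_pow_left₀ (by positivity)
        (hT.norm_pow_succ_apply_sq_le x j) 2) n
  simpa using h

theorem trace_pow_mul_eq_sum {ι : Type*} [Fintype ι] (hT : T.IsSymmetric)
    {u : OrthonormalBasis ι 𝕜 E} {μ : ι → ℝ} (hu : ∀ p, T (u p) = (μ p : 𝕜) • u p) (k : ℕ)
    (M : E →ₗ[𝕜] E) :
    trace 𝕜 E (T ^ k * M) = ∑ p, (μ p : 𝕜) ^ k * ⟪u p, M (u p)⟫_𝕜 := by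
  rw [trace_eq_sum_inner _ u]
  refine sum_congr rfl fun p _ => ?_
  have hvec : Module.End.HasEigenvector T (μ p : 𝕜) (u p) :=
    ⟨Module.End.mem_eigenspace_iff.2 (hu p), u.orthonormal.ne_zero p⟩
  rw [Module.End.mul_apply, ← hT.pow k, hvec.pow_apply k, inner_smul_left, map_pow,
    RCLike.conj_ofReal]

end Single

variable {ι : Type*} [Fintype ι] {T : ι → E →ₗ[𝕜] E}

theorem inner_sum_pow_two_mul_apply_self (hT : ∀ i, (T i).IsSymmetric) (x : E) (n : ℕ) :
    ⟪x, (∑ i, T i ^ (2 * n)) x⟫_𝕜 = (∑ i, ‖(T i ^ n) x‖ ^ 2 : ℝ) := by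
  simp only [LinearMap.sum_apply, inner_sum, (hT _).inner_pow_two_mul_apply_self,
    RCLike.ofReal_sum]

theorem sum_norm_apply_sq_pow_le [Nonempty ι] (hT : ∀ i, (T i).IsSymmetric) {x : E}
    (hx : ‖x‖ = 1) (n : ℕ) :
    (∑ i, ‖T i x‖ ^ 2) ^ n ≤ (Fintype.card ι : ℝ) ^ n * ∑ i, ‖(T i ^ n) x‖ ^ 2 :=
  calc (∑ i, ‖T i x‖ ^ 2) ^ n ≤ (Fintype.card ι : ℝ) ^ n * ∑ i, (‖T i x‖ ^ 2) ^ n :=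
        pow_sum_le_card_pow_mul_sum_pow univ_nonempty (fun i _ => by positivity) n
    _ ≤ (Fintype.card ι : ℝ) ^ n * ∑ i, ‖(T i ^ n) x‖ ^ 2 := by
        gcongr with i
        exact (hT i).norm_apply_sq_pow_le hx n

end LinearMap.IsSymmetric

namespace LinearMap

variable {𝕜 E : Type*} [RCLike 𝕜] [NormedAddCommGroup E] [InnerProductSpace 𝕜 E]
  [FiniteDimensional 𝕜 E]

theorem trace_sum_sq_pow_add_le {ι : Type*} [Fintype ι] [Nonempty ι] {T : ι → E →ₗ[𝕜] E}
    (hT : ∀ i, (T i).IsSymmetric) (D k : ℕ) :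
    trace 𝕜 E ((∑ i, T i ^ 2) ^ (k + D)) ≤
      (Fintype.card ι : 𝕜) ^ D * trace 𝕜 E ((∑ i, T i ^ 2) ^ k * ∑ i, T i ^ (2 * D)) := by
  set Z := ∑ i, T i ^ 2
  have hZ : Z.IsSymmetric :=
    sum_induction _ IsSymmetric (fun _ _ => IsSymmetric.add) IsSymmetric.zero
      fun i _ => (hT i).pow 2
  obtain ⟨u, μ, hu⟩ : ∃ (u : OrthonormalBasis (Fin (Module.finrank 𝕜 E)) 𝕜 E) (μ : _ → ℝ),
      ∀ p, Z (u p) = (μ p : 𝕜) • u p :=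
    ⟨_, _, hZ.apply_eigenvectorBasis rfl⟩
  have hu_self : ∀ p, ⟪u p, u p⟫_𝕜 = 1 := fun p =>
    inner_self_eq_one_of_norm_eq_one (u.orthonormal.1 p)
  have hμ : ∀ p, μ p = ∑ i, ‖T i (u p)‖ ^ 2 := fun p => by
    have h := IsSymmetric.inner_sum_pow_two_mul_apply_self hT (u p) 1
    rw [hu, inner_smul_right, hu_self, mul_one] at h
    exact_mod_cast h
  have hreal : ∑ p, μ p ^ (k + D) ≤
      (Fintype.card ι : ℝ) ^ D * ∑ p, μ p ^ k * ∑ i, ‖(T i ^ D) (u p)‖ ^ 2 := by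
    rw [mul_sum]
    refine sum_le_sum fun p _ => ?_
    have hμ_nonneg : 0 ≤ μ p := hμ p ▸ by positivity
    have hbound := IsSymmetric.sum_norm_apply_sq_pow_le hT (u.orthonormal.1 p) D
    rw [← hμ p] at hbound
    calc μ p ^ (k + D) = μ p ^ k * μ p ^ D := pow_add _ _ _
      _ ≤ μ p ^ k * ((Fintype.card ι : ℝ) ^ D * ∑ i, ‖(T i ^ D) (u p)‖ ^ 2) := by gcongr
      _ = _ := by ring
  rw [← mul_one (Z ^ (k + D)), hZ.trace_pow_mul_eq_sum hu, hZ.trace_pow_mul_eq_sum hu]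
  simp only [Module.End.one_apply, hu_self, mul_one,
    IsSymmetric.inner_sum_pow_two_mul_apply_self hT]
  exact_mod_cast hreal

end LinearMap

/-- For Hermitian X₁,…,X_ℓ and Z = ∑ᵢ Xᵢ², for all D, k ∈ ℕ,
Tr(Z^{k+D}) ≤ ℓ^D · Tr(Z^k (∑ᵢ Xᵢ^{2D})). -/
theorem stmt3 (N ℓ : ℕ) (hℓ : 0 < ℓ) (X : Fin ℓ → Matrix (Fin N) (Fin N) ℂ)
    (hX : ∀ i, (X i).IsHermitian) (D k : ℕ) :
    ((∑ i, (X i) ^ 2) ^ (k + D)).trace ≤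
      (ℓ : ℂ) ^ D * ((∑ i, (X i) ^ 2) ^ k * ∑ i, (X i) ^ (2 * D)).trace := by
  have : Nonempty (Fin ℓ) := ⟨⟨0, hℓ⟩⟩
  let b := EuclideanSpace.basisFun (Fin N) ℂ
  have htrace : ∀ A, LinearMap.trace ℂ _ (Matrix.toLinAlgEquiv b.toBasis A) = A.trace :=
    fun A => Matrix.trace_toLin_eq A b.toBasis
  have h := LinearMap.trace_sum_sq_pow_add_le
    (T := fun i => Matrix.toLinAlgEquiv b.toBasis (X i))
    (fun i => (Matrix.isSymmetric_toLin_iff b).2 (hX i)) D k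
  rw [← htrace, ← htrace]
  simpa only [map_pow, map_sum, map_mul, Fintype.card_fin] using h
end

section
/- For N×N Hermitian matrices X₁,…,X_ℓ, setting Z = ∑ᵢ Xᵢ², for every positive integer D one has Tr(Z^D) ≤ ℓ^D · maxᵢ Tr(Xᵢ^{2D}). -/
/-!
Conjugating by a unitary that diagonalises `Z = ∑ Xᵢ²` changes no trace and turns the `Xᵢ²`
into positive semidefinite `Aᵢ` with `Tr(Z^D) = ∑ⱼ (∑ᵢ (Aᵢ)ⱼⱼ)^D`. The power-mean inequality
bounds this by `ℓ^(D-1) ∑ᵢ ∑ⱼ ((Aᵢ)ⱼⱼ)^D`, and Jensen's inequality for the spectral measure of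
`Aᵢ` at the `j`-th basis vector gives `((Aᵢ)ⱼⱼ)^D ≤ (Aᵢ^D)ⱼⱼ`. Summing over `j` leaves
`ℓ^(D-1) ∑ᵢ Tr(Xᵢ^(2D)) ≤ ℓ^D maxᵢ Tr(Xᵢ^(2D))`.
-/

open Matrix Unitary
open scoped ComplexOrder

namespace Matrix

variable {n 𝕜 : Type*} [Fintype n] [DecidableEq n] [RCLike 𝕜]

lemma trace_conjStarAlgAut_s4 {R : Type*} [CommSemiring R] [StarRing R]
    (u : unitary (Matrix n n R)) (A : Matrix n n R) :
    trace (conjStarAlgAut R _ u A) = trace A := by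
  rw [conjStarAlgAut_apply, trace_mul_cycle, coe_star_mul_self, one_mul]

lemma UnitaryGroup.sum_norm_sq_apply (U : unitaryGroup n 𝕜) (j : n) :
    ∑ k, ‖(U : Matrix n n 𝕜) j k‖ ^ 2 = 1 := by
  have h := congrArg (fun M : Matrix n n 𝕜 => M j j) (Unitary.mul_star_self_of_mem U.2)
  simp only [Matrix.mul_apply, Matrix.star_apply, RCLike.star_def, RCLike.mul_conj,
    Matrix.one_apply_eq] at h
  exact_mod_cast h

lemma IsHermitian.re_pow_apply_self {A : Matrix n n 𝕜} (hA : A.IsHermitian) (m : ℕ) (j : n) :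
    RCLike.re ((A ^ m) j j) =
      ∑ k, ‖(hA.eigenvectorUnitary : Matrix n n 𝕜) j k‖ ^ 2 * hA.eigenvalues k ^ m := by
  conv_lhs => rw [hA.spectral_theorem, ← map_pow, conjStarAlgAut_apply, diagonal_pow, mul_apply,
    map_sum]
  refine Finset.sum_congr rfl fun k _ => ?_
  rw [mul_diagonal, star_apply, RCLike.star_def, mul_right_comm, RCLike.mul_conj, Pi.pow_apply,
    Function.comp_apply, ← RCLike.ofReal_pow, ← RCLike.ofReal_pow, ← RCLike.ofReal_mul,
    RCLike.ofReal_re]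

lemma PosSemidef.re_apply_self_pow_le {A : Matrix n n 𝕜} (hA : A.PosSemidef) (m : ℕ) (j : n) :
    RCLike.re (A j j) ^ m ≤ RCLike.re ((A ^ m) j j) := by
  have h₁ := hA.isHermitian.re_pow_apply_self 1 j
  simp only [pow_one] at h₁
  rw [h₁, hA.isHermitian.re_pow_apply_self m j]
  -- the squared moduli of row `j` of the eigenvector unitary are probability weights
  exact Real.pow_arith_mean_le_arith_mean_pow Finset.univ _ _ (fun _ _ => sq_nonneg _)
    (UnitaryGroup.sum_norm_sq_apply hA.isHermitian.eigenvectorUnitary j)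
    (fun k _ => hA.eigenvalues_nonneg k) m

variable {ι : Type*} [Fintype ι]

lemma re_trace_sum_pow_le_of_sum_eq_diagonal {A : ι → Matrix n n 𝕜}
    (hA : ∀ i, (A i).PosSemidef) {d : n → ℝ} (hd : ∑ i, A i = diagonal (RCLike.ofReal ∘ d))
    (m : ℕ) :
    RCLike.re (trace ((∑ i, A i) ^ (m + 1))) ≤
      Fintype.card ι ^ m * ∑ i, RCLike.re (trace (A i ^ (m + 1))) := by
  have hd_apply (j : n) : d j = ∑ i, RCLike.re (A i j j) := by
    simpa [sum_apply] using congrArg (fun M : Matrix n n 𝕜 => RCLike.re (M j j)) hd.symm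
  have hdiag_nonneg (i : ι) (j : n) : 0 ≤ RCLike.re (A i j j) :=
    (RCLike.nonneg_iff.mp (hA i).diag_nonneg).1
  calc RCLike.re (trace ((∑ i, A i) ^ (m + 1)))
      = ∑ j, (∑ i, RCLike.re (A i j j)) ^ (m + 1) := by
        rw [hd, diagonal_pow, trace_diagonal, map_sum]
        refine Finset.sum_congr rfl fun j _ => ?_
        rw [Pi.pow_apply, Function.comp_apply, ← RCLike.ofReal_pow, RCLike.ofReal_re, hd_apply]
    _ ≤ ∑ j, (Fintype.card ι : ℝ) ^ m * ∑ i, RCLike.re (A i j j) ^ (m + 1) :=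
        Finset.sum_le_sum fun j _ =>
          pow_sum_le_card_mul_sum_pow (fun i _ => hdiag_nonneg i j) m
    _ ≤ ∑ j, (Fintype.card ι : ℝ) ^ m * ∑ i, RCLike.re ((A i ^ (m + 1)) j j) := by
        gcongr with j _ i _
        exact (hA i).re_apply_self_pow_le (m + 1) j
    _ = Fintype.card ι ^ m * ∑ i, RCLike.re (trace (A i ^ (m + 1))) := by
        rw [← Finset.mul_sum, Finset.sum_comm]
        simp [trace]

lemma PosSemidef.re_trace_sum_pow_le {A : ι → Matrix n n 𝕜} (hA : ∀ i, (A i).PosSemidef)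
    (m : ℕ) :
    RCLike.re (trace ((∑ i, A i) ^ (m + 1))) ≤
      Fintype.card ι ^ m * ∑ i, RCLike.re (trace (A i ^ (m + 1))) := by
  have hS : (∑ i, A i).IsHermitian := (posSemidef_sum _ fun i _ => hA i).isHermitian
  let φ := conjStarAlgAut 𝕜 (Matrix n n 𝕜) (star hS.eigenvectorUnitary)
  have hφA (i : ι) : (φ (A i)).PosSemidef := by
    rw [conjStarAlgAut_apply]
    exact isUnit_coe.posSemidef_star_right_conjugate_iff.mpr (hA i)
  have hφS : ∑ i, φ (A i) = diagonal (RCLike.ofReal ∘ hS.eigenvalues) := by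
    rw [← map_sum, hS.conjStarAlgAut_star_eigenvectorUnitary]
  have key := re_trace_sum_pow_le_of_sum_eq_diagonal hφA hφS m
  simpa only [← map_sum, ← map_pow, φ, trace_conjStarAlgAut_s4] using key

end Matrix

theorem stmt4_general (N ℓ : ℕ) (X : Fin ℓ → Matrix (Fin N) (Fin N) ℂ)
    (hX : ∀ i, (X i).IsHermitian) (D : ℕ) (hD : 1 ≤ D) :
    (((∑ i, (X i) ^ 2) ^ D).trace).re ≤
      (ℓ : ℝ) ^ D * ⨆ i, (((X i) ^ (2 * D)).trace).re := by
  obtain ⟨m, rfl⟩ := Nat.exists_eq_add_of_le' hD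
  have hsq (i : Fin ℓ) : (X i ^ 2).PosSemidef := by
    simpa only [sq, (hX i).eq] using posSemidef_conjTranspose_mul_self (X i)
  set t : Fin ℓ → ℝ := fun i => ((X i ^ (2 * (m + 1))).trace).re
  calc (((∑ i, X i ^ 2) ^ (m + 1)).trace).re
      ≤ (ℓ : ℝ) ^ m * ∑ i, (((X i ^ 2) ^ (m + 1)).trace).re := by
        simpa using PosSemidef.re_trace_sum_pow_le hsq m
    _ ≤ (ℓ : ℝ) ^ m * (ℓ * ⨆ i, t i) := by
        simp_rw [← pow_mul]
        gcongr
        simpa using Finset.sum_le_card_nsmul Finset.univ t _ fun i _ =>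
          le_ciSup (Finite.bddAbove_range t) i
    _ = (ℓ : ℝ) ^ (m + 1) * ⨆ i, t i := by ring

/-- For Hermitian X₁,…,X_ℓ and Z = ∑ᵢ Xᵢ², for every D ≥ 1,
Tr(Z^D) ≤ ℓ^D · maxᵢ Tr(Xᵢ^{2D}). -/
theorem stmt4 (N ℓ : ℕ) (hℓ : 0 < ℓ) (X : Fin ℓ → Matrix (Fin N) (Fin N) ℂ)
    (hX : ∀ i, (X i).IsHermitian) (D : ℕ) (hD : 1 ≤ D) :
    (((∑ i, (X i) ^ 2) ^ D).trace).re ≤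
      (ℓ : ℝ) ^ D * ⨆ i, (((X i) ^ (2 * D)).trace).re :=
  stmt4_general N ℓ X hX D hD
end

section
/- Define a₀ = 1 and a_{k+1} = (d/η)(1 + |A|(1 + a_k) + 2∑_{p=0}^{k} a_p a_{k−p}), where d ≥ 1, η > 0, A ∈ ℝ with (1+|A|)d ≥ η. Then for every k ≥ 0, a_k ≤ C_k (4(1+|A|)d/η)^k, where C_k is the k-th Catalan number; in particular a_k ≤ (16(1+|A|)d/η)^k. -/
lemma catalan_le_four_pow (n : ℕ) : catalan n ≤ 4 ^ n := by
  have h1 : catalan n ≤ n.centralBinom := by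
    calc catalan n ≤ (n + 1) * catalan n := Nat.le_mul_of_pos_left _ n.succ_pos
    _ = n.centralBinom := succ_mul_catalan_eq_centralBinom n
  have h2 : n.centralBinom ≤ 2 ^ (2 * n) := by
    have := Nat.sum_range_choose (2 * n)
    calc n.centralBinom = (2 * n).choose n := rfl
    _ ≤ ∑ i ∈ Finset.range (2 * n + 1), (2 * n).choose i :=
        Finset.single_le_sum (fun i _ => Nat.zero_le _) (Finset.mem_range.mpr (by omega))
    _ = 2 ^ (2 * n) := Nat.sum_range_choose (2 * n)
  calc catalan n ≤ 2 ^ (2 * n) := h1.trans h2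
  _ = 4 ^ n := by rw [pow_mul]; norm_num

lemma catalan_succ_range (n : ℕ) :
    catalan (n + 1) = ∑ p ∈ Finset.range (n + 1), catalan p * catalan (n - p) := by
  rw [catalan_succ]
  exact Fin.sum_univ_eq_sum_range (fun i => catalan i * catalan (n - i)) (n+1)

lemma one_le_catalan : ∀ n, 1 ≤ catalan n := by
  intro n
  induction n with
  | zero => simp
  | succ n ih =>
    rw [catalan_succ_range]
    calc 1 ≤ catalan 0 * catalan (n - 0) := by simpa using ih
    _ ≤ _ := Finset.single_le_sum (f := fun p => catalan p * catalan (n - p))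
        (fun i _ => Nat.zero_le _) (Finset.mem_range.mpr (by omega))

lemma catalan_le_succ (n : ℕ) : catalan n ≤ catalan (n + 1) := by
  rw [catalan_succ_range]
  calc catalan n = catalan n * catalan (n - n) := by simp
  _ ≤ _ := Finset.single_le_sum (f := fun p => catalan p * catalan (n - p))
      (fun i _ => Nat.zero_le _) (Finset.mem_range.mpr (by omega))

lemma catalan_range_succ (n : ℕ) :
    (catalan (n + 1) : ℝ) = ∑ p ∈ Finset.range (n + 1), (catalan p : ℝ) * catalan (n - p) := by
  rw [catalan_succ_range]; push_cast; rfl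

/-- For the recursion a₀ = 1, a_{k+1} = (d/η)(1 + |A|(1+a_k) + 2∑_{p=0}^k a_p a_{k−p}),
with d ≥ 1, η > 0, (1+|A|)d ≥ η, one has a_k ≤ C_k (4(1+|A|)d/η)^k where C_k is the
k-th Catalan number; in particular a_k ≤ (16(1+|A|)d/η)^k. -/
theorem stmt8 (d η A : ℝ) (hd : 1 ≤ d) (hη : 0 < η) (hA : η ≤ (1 + |A|) * d)
    (a : ℕ → ℝ) (ha0 : a 0 = 1)
    (harec : ∀ k : ℕ, a (k + 1) =
      (d / η) * (1 + |A| * (1 + a k) + 2 * ∑ p ∈ Finset.range (k + 1), a p * a (k - p))) :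
    ∀ k : ℕ, a k ≤ (catalan k : ℝ) * (4 * (1 + |A|) * d / η) ^ k ∧
      a k ≤ (16 * (1 + |A|) * d / η) ^ k := by
  set M : ℝ := 4 * (1 + |A|) * d / η with hM
  have habs : (0:ℝ) ≤ |A| := abs_nonneg A
  have hc : (0:ℝ) < d / η := div_pos (by linarith) hη
  have hM4 : (4:ℝ) ≤ M := by
    rw [hM, le_div_iff₀ hη]; linarith
  have hM0 : (0:ℝ) ≤ M := by linarith
  -- nonnegativity
  have hnn : ∀ k, 0 ≤ a k := by
    intro k
    induction k using Nat.strong_induction_on with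
    | _ k ih =>
      match k with
      | 0 => rw [ha0]; norm_num
      | k + 1 =>
        rw [harec k]
        have hs : 0 ≤ ∑ p ∈ Finset.range (k + 1), a p * a (k - p) :=
          Finset.sum_nonneg fun p hp => by
            have hp' := Finset.mem_range.mp hp
            exact mul_nonneg (ih p (by omega)) (ih _ (by omega))
        have h1 : 0 ≤ 1 + |A| * (1 + a k) := by
          have := ih k (by omega)
          positivity
        positivity
  -- key bound
  have key : ∀ k, a k ≤ (catalan k : ℝ) * M ^ k := by
    intro k
    induction k using Nat.strong_induction_on with
    | _ k ih =>
      match k with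
      | 0 => simp [ha0]
      | k + 1 =>
        have hBge : (1:ℝ) ≤ (catalan (k + 1) : ℝ) * M ^ k := by
          have h1 : (1:ℝ) ≤ (catalan (k + 1) : ℝ) := by
            exact_mod_cast one_le_catalan (k+1)
          have h2 : (1:ℝ) ≤ M ^ k := one_le_pow₀ (by linarith)
          nlinarith
        set B : ℝ := (catalan (k + 1) : ℝ) * M ^ k with hB
        have hS : ∑ p ∈ Finset.range (k + 1), a p * a (k - p) ≤ B := by
          rw [hB, catalan_range_succ, Finset.sum_mul]
          apply Finset.sum_le_sum
          intro p hp
          have hpk : p ≤ k := by simpa using Nat.lt_succ_iff.mp (Finset.mem_range.mp hp)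
          have h1 := ih p (by omega)
          have h2 := ih (k - p) (by omega)
          calc a p * a (k - p) ≤ ((catalan p : ℝ) * M ^ p) * ((catalan (k-p) : ℝ) * M ^ (k-p)) :=
            mul_le_mul h1 h2 (hnn _) (by positivity)
          _ = (catalan p : ℝ) * (catalan (k-p) : ℝ) * M ^ k := by
              rw [mul_mul_mul_comm, ← pow_add M p (k - p), Nat.add_sub_cancel' hpk]
        have hak : a k ≤ B := by
          have h1 := ih k (by omega)
          have hmono : (catalan k : ℝ) ≤ (catalan (k+1) : ℝ) := by
            exact_mod_cast catalan_le_succ k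
          have hMk : (0:ℝ) ≤ M ^ k := by positivity
          calc a k ≤ (catalan k : ℝ) * M ^ k := h1
          _ ≤ B := by rw [hB]; nlinarith
        have hMpow : ((catalan (k+1) : ℝ)) * M ^ (k + 1) = B * M := by
          rw [hB, pow_succ]; ring
        rw [harec k, hMpow]
        have hMval : M = 4 * (1 + |A|) * (d / η) := by rw [hM]; ring
        nlinarith [mul_le_mul_of_nonneg_left hS hc.le, mul_le_mul_of_nonneg_left hak hc.le,
          mul_le_mul_of_nonneg_left hBge hc.le, mul_nonneg hc.le habs,
          mul_le_mul_of_nonneg_left (mul_le_mul_of_nonneg_left hak hc.le) habs,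
          mul_le_mul_of_nonneg_left (mul_le_mul_of_nonneg_left hBge hc.le) habs]
  intro k
  refine ⟨key k, ?_⟩
  have h1 : (catalan k : ℝ) * M ^ k ≤ (4:ℝ) ^ k * M ^ k := by
    have : (catalan k : ℝ) ≤ (4:ℝ) ^ k := by exact_mod_cast catalan_le_four_pow k
    have : (0:ℝ) ≤ M ^ k := by positivity
    nlinarith [pow_nonneg hM0 k, (by exact_mod_cast catalan_le_four_pow k : (catalan k : ℝ) ≤ (4:ℝ) ^ k)]
  have h2 : (4:ℝ) ^ k * M ^ k = (16 * (1 + |A|) * d / η) ^ k := by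
    rw [← mul_pow, hM]; ring_nf
  exact (key k).trans (h1.trans_eq h2)
end

section
/- Let I be a closed bounded interval of length |I|, let x₁,…,x_n ∈ ℝ, and 0 < η < 1. Set ε = η|I|/(2n). Then there exists y ∈ I with |y − xᵢ| > ε for all i, such that ∑_{i=1}^{n} ln(|xᵢ − y| − ε) ≥ n · ln(|I|(1−η)/(2e)). -/
/-!
Remove the ε-neighbourhoods of the points from `I = [a, b]`; what is left, `E`, has measure
`m ≥ |I|(1 - η)`. Off the ball `closedBall p ε` the sublevel sets `{dist p y - ε < r}` have
measure `2r`, so by the layer-cake formula `∫⁻_E (log (m/2) - log (dist p y - ε))⁺ ≤ m`.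
Averaging the sum of these positive parts over `E` gives a point `y ∈ E` where it is at most
`n`, hence
`∑ log (|xᵢ - y| - ε) ≥ n (log (m/2) - 1) ≥ n log (|I|(1 - η)/(2e))`.
-/

open MeasureTheory Set Real Metric
open scoped ENNReal

theorem lintegral_ofReal_log_sub_log_le {α : Type*} [MeasurableSpace α] {μ : Measure α}
    {u : α → ℝ} (hu : Measurable u) (hpos : ∀ᵐ y ∂μ, 0 < u y) {K c : ℝ} (hK : 0 ≤ K)
    (hc : 0 < c) (hsub : ∀ r > 0, μ {y | u y < r} ≤ ENNReal.ofReal (K * r)) :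
    ∫⁻ y, ENNReal.ofReal (log c - log (u y)) ∂μ ≤ ENNReal.ofReal (K * c) := by
  have htail : ∀ t ∈ Ioi (0 : ℝ), μ {y | t < max (log c - log (u y)) 0} ≤
      ENNReal.ofReal (K * c * exp (-t)) := by
    intro t ht
    refine (measure_mono_ae ?_).trans
      ((hsub (c * exp (-t)) (by positivity)).trans_eq (by ring_nf))
    filter_upwards [hpos] with y hy hty
    show u y < c * exp (-t)
    have hlog : log (u y) < log c + -t := by
      have := (lt_max_iff.1 hty).resolve_right (not_lt.2 (le_of_lt ht))
      linarith
    simpa [exp_add, exp_log hc] using (log_lt_iff_lt_exp hy).1 hlog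
  have hexp : IntegrableOn (fun t => K * c * exp (-t)) (Ioi 0) := by
    have := (exp_neg_integrableOn_Ioi 0 one_pos).const_mul (K * c)
    simp only [neg_mul, one_mul] at this
    exact this
  calc ∫⁻ y, ENNReal.ofReal (log c - log (u y)) ∂μ
      = ∫⁻ y, ENNReal.ofReal (max (log c - log (u y)) 0) ∂μ := by simp
    _ = ∫⁻ t in Ioi 0, μ {y | t < max (log c - log (u y)) 0} :=
      lintegral_eq_lintegral_meas_lt μ (ae_of_all _ fun _ => le_max_right _ _) (by fun_prop)
    _ ≤ ∫⁻ t in Ioi 0, ENNReal.ofReal (K * c * exp (-t)) :=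
      setLIntegral_mono' measurableSet_Ioi htail
    _ = ENNReal.ofReal (K * c) := by
      rw [← ofReal_integral_eq_lintegral_ofReal hexp (ae_of_all _ fun _ => by positivity),
        integral_const_mul, integral_exp_neg_Ioi_zero, mul_one]

theorem volume_setOf_dist_sub_lt_diff_closedBall (p : ℝ) {ε r : ℝ} (hε : 0 ≤ ε)
    (hr : 0 < r) :
    volume ({y | dist p y - ε < r} \ closedBall p ε) = ENNReal.ofReal (2 * r) := by
  have hball : {y | dist p y - ε < r} = ball p (ε + r) := by
    ext y; simp [dist_comm, sub_lt_iff_lt_add']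
  rw [hball, measure_sdiff (closedBall_subset_ball (by linarith))
    measurableSet_closedBall.nullMeasurableSet measure_closedBall_lt_top.ne, Real.volume_ball,
    Real.volume_closedBall, ← ENNReal.ofReal_sub _ (by positivity)]
  ring_nf

theorem setLIntegral_compl_closedBall_ofReal_log_sub_log_le (p : ℝ) {ε c : ℝ} (hε : 0 ≤ ε)
    (hc : 0 < c) :
    ∫⁻ y in (closedBall p ε)ᶜ, ENNReal.ofReal (log c - log (dist p y - ε)) ≤
      ENNReal.ofReal (2 * c) := by
  refine lintegral_ofReal_log_sub_log_le (by fun_prop) ?_ zero_le_two hc fun r hr => ?_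
  · refine (ae_restrict_iff' measurableSet_closedBall.compl).2 (ae_of_all _ fun y hy => ?_)
    simpa [dist_comm] using hy
  · rw [Measure.restrict_apply' measurableSet_closedBall.compl, ← sdiff_eq,
      volume_setOf_dist_sub_lt_diff_closedBall p hε hr]

theorem exists_mem_card_mul_log_le_sum_log_dist_sub {ι : Type*} [Fintype ι] (p : ι → ℝ)
    {ε : ℝ} (hε : 0 ≤ ε) {E : Set ℝ} (hE₀ : volume E ≠ 0) (hE : volume E ≠ ∞)
    (hfar : ∀ y ∈ E, ∀ i, ε < dist (p i) y) :
    ∃ y ∈ E, Fintype.card ι * log ((volume E).toReal / (2 * exp 1)) ≤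
      ∑ i, log (dist (p i) y - ε) := by
  set m := (volume E).toReal
  have hm : 0 < m := ENNReal.toReal_pos hE₀ hE
  set f : ℝ → ℝ≥0∞ := fun y =>
    ∑ i, ENNReal.ofReal (log (m / 2) - log (dist (p i) y - ε))
  have hint : ∫⁻ y in E, f y ≤ Fintype.card ι * volume E := by
    rw [lintegral_finsetSum _ fun i _ => by fun_prop]
    calc ∑ i, ∫⁻ y in E, ENNReal.ofReal (log (m / 2) - log (dist (p i) y - ε))
        ≤ ∑ _i : ι, ENNReal.ofReal (2 * (m / 2)) := by
          gcongr with i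
          refine (lintegral_mono_set fun y hy => ?_).trans
            (setLIntegral_compl_closedBall_ofReal_log_sub_log_le (p i) hε (by positivity))
          simpa [dist_comm] using hfar y hy i
      _ = Fintype.card ι * volume E := by
          rw [Finset.sum_const, Finset.card_univ, nsmul_eq_mul, mul_div_cancel₀ _ two_ne_zero,
            ENNReal.ofReal_toReal hE]
  obtain ⟨y, hyE, hy⟩ := exists_le_setLAverage hE₀ hE (by fun_prop : AEMeasurable f _)
  have hfy : f y ≤ Fintype.card ι :=
    hy.trans ((setLAverage_eq volume f E).trans_le (ENNReal.div_le_of_le_mul hint))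
  have hsum : ∑ i, (log (m / 2) - log (dist (p i) y - ε)) ≤ Fintype.card ι := by
    calc ∑ i, (log (m / 2) - log (dist (p i) y - ε))
        ≤ ∑ i, (ENNReal.ofReal (log (m / 2) - log (dist (p i) y - ε))).toReal := by
          gcongr with i
          exact ENNReal.toReal_ofReal' ▸ le_max_left _ _
      _ = (f y).toReal := (ENNReal.toReal_sum fun i _ => ENNReal.ofReal_ne_top).symm
      _ ≤ Fintype.card ι := by
          simpa using ENNReal.toReal_mono (ENNReal.natCast_ne_top _) hfy
  have hlog : log (m / (2 * exp 1)) = log (m / 2) - 1 := by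
    rw [← div_div, log_div (by positivity) (exp_pos 1).ne', log_exp]
  refine ⟨y, hyE, ?_⟩
  rw [Finset.sum_sub_distrib, Finset.sum_const, Finset.card_univ, nsmul_eq_mul] at hsum
  rw [hlog]
  linarith

theorem ofReal_sub_card_mul_le_volume_Icc_diff_iUnion_closedBall {ι : Type*} [Fintype ι]
    (a b : ℝ) (p : ι → ℝ) {ε : ℝ} (hε : 0 ≤ ε) :
    ENNReal.ofReal (b - a - Fintype.card ι * (2 * ε)) ≤
      volume (Icc a b \ ⋃ i, closedBall (p i) ε) := by
  have hU :
      volume (⋃ i, closedBall (p i) ε) ≤ ENNReal.ofReal (Fintype.card ι * (2 * ε)) := by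
    calc volume (⋃ i, closedBall (p i) ε) ≤ ∑ i, volume (closedBall (p i) ε) :=
          measure_iUnion_fintype_le _ _
      _ = ENNReal.ofReal (Fintype.card ι * (2 * ε)) := by
          simp [Real.volume_closedBall, ENNReal.ofReal_mul]
  calc ENNReal.ofReal (b - a - Fintype.card ι * (2 * ε))
      = volume (Icc a b) - ENNReal.ofReal (Fintype.card ι * (2 * ε)) := by
        rw [Real.volume_Icc, ENNReal.ofReal_sub _ (by positivity)]
    _ ≤ volume (Icc a b) - volume (⋃ i, closedBall (p i) ε) := tsub_le_tsub_left hU _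
    _ ≤ volume (Icc a b \ ⋃ i, closedBall (p i) ε) := le_measure_sdiff

/-- Given a closed bounded interval [a,b], points x₁,…,x_n and 0 < η < 1, with
ε = η(b−a)/(2n), there is y ∈ [a,b] at distance greater than ε from all xᵢ with
∑ᵢ ln(|xᵢ − y| − ε) ≥ n ln((b−a)(1−η)/(2e)). -/
theorem stmt10 (a b : ℝ) (hab : a < b) (n : ℕ) (hn : 0 < n) (x : Fin n → ℝ)
    (η : ℝ) (hη : 0 < η) (hη1 : η < 1) :
    ∃ y ∈ Set.Icc a b, (∀ i, η * (b - a) / (2 * n) < |y - x i|) ∧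
      (n : ℝ) * Real.log ((b - a) * (1 - η) / (2 * Real.exp 1)) ≤
        ∑ i, Real.log (|x i - y| - η * (b - a) / (2 * n)) := by
  set ε := η * (b - a) / (2 * n)
  have hε : 0 ≤ ε := by have := sub_pos.2 hab; positivity
  set E := Icc a b \ ⋃ i, closedBall (x i) ε
  have hL : 0 < (b - a) * (1 - η) := mul_pos (sub_pos.2 hab) (sub_pos.2 hη1)
  have hLE : ENNReal.ofReal ((b - a) * (1 - η)) ≤ volume E := by
    convert ofReal_sub_card_mul_le_volume_Icc_diff_iUnion_closedBall a b x hε using 2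
    have : (n : ℝ) ≠ 0 := Nat.cast_ne_zero.2 hn.ne'
    simp only [Fintype.card_fin, ε]
    field_simp
  have hE : volume E ≠ ∞ := ne_top_of_le_ne_top (by simp) (measure_mono sdiff_subset)
  have hfar : ∀ y ∈ E, ∀ i, ε < dist (x i) y := fun y hy i => by
    simpa [dist_comm] using fun h => hy.2 (mem_iUnion_of_mem i h)
  obtain ⟨y, hyE, hy⟩ := exists_mem_card_mul_log_le_sum_log_dist_sub x hε
    ((ENNReal.ofReal_pos.2 hL).trans_le hLE).ne' hE hfar
  refine ⟨y, hyE.1, fun i => ?_, le_trans ?_ (by simpa [Real.dist_eq] using hy)⟩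
  · simpa [Real.dist_eq, abs_sub_comm] using hfar y hyE i
  · gcongr
    exact ENNReal.ofReal_le_iff_le_toReal hE |>.1 hLE
end

section
/- Let c₁,…,c_r > 0 and p ≥ 1. The infimum of α ↦ ∑ᵢ c_i^{1/(2p+1)} α_i^{2 − 1/(2p+1)} over the probability simplex is achieved at α_i* = c_i^{−1/(2p)} / ∑_j c_j^{−1/(2p)}, and the minimum value equals (∑_j c_j^{−1/(2p)})^{1/(2p+1) − 1}. -/
/-! Writing `w i = c i ^ (-1/(2p))` and `q = 2 - 1/(2p+1)`, the objective is
`∑ w i ^ (1 - q) * α i ^ q`, since `c i ^ (1/(2p+1)) = w i ^ (1 - q)`. Jensen's inequality for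
the convex function `x ↦ x ^ q`, with weights `w i / ∑ w` at the points `α i / w i`, bounds it
below by `(∑ w) ^ (1 - q)` on the simplex, with equality when all the points `α i / w i` coincide,
i.e. at `α = w / ∑ w`. -/

open Finset Real

namespace Real

variable {ι : Type*} {s : Finset ι} {w α : ι → ℝ} {q : ℝ}

theorem rpow_sum_le_rpow_sum_mul_sum_rpow_mul_rpow (hw : ∀ i ∈ s, 0 < w i)
    (hα : ∀ i ∈ s, 0 ≤ α i) (hq : 1 ≤ q) :
    (∑ i ∈ s, α i) ^ q ≤ (∑ i ∈ s, w i) ^ (q - 1) * ∑ i ∈ s, w i ^ (1 - q) * α i ^ q := by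
  rcases s.eq_empty_or_nonempty with rfl | hs
  · simp [zero_rpow (by linarith : q ≠ 0)]
  set W := ∑ i ∈ s, w i
  have hW : 0 < W := sum_pos hw hs
  have jensen := rpow_arith_mean_le_arith_mean_rpow s (fun i => w i / W) (fun i => α i / w i)
    (fun i hi => (div_pos (hw i hi) hW).le) (by rw [← sum_div, div_self hW.ne'])
    (fun i hi => div_nonneg (hα i hi) (hw i hi).le) hq
  have hmean : ∑ i ∈ s, w i / W * (α i / w i) = (∑ i ∈ s, α i) / W := by
    rw [sum_div]
    exact sum_congr rfl fun i hi => by field_simp [(hw i hi).ne']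
  have hterm : ∀ i ∈ s, w i / W * (α i / w i) ^ q = W⁻¹ * (w i ^ (1 - q) * α i ^ q) := by
    intro i hi
    rw [div_rpow (hα i hi) (hw i hi).le, rpow_sub (hw i hi), rpow_one]
    ring
  rw [hmean, sum_congr rfl hterm, ← mul_sum, div_rpow (sum_nonneg hα) hW.le,
    div_le_iff₀ (rpow_pos_of_pos hW q)] at jensen
  calc (∑ i ∈ s, α i) ^ q
      ≤ W⁻¹ * (∑ i ∈ s, w i ^ (1 - q) * α i ^ q) * W ^ q := jensen
    _ = W ^ (q - 1) * ∑ i ∈ s, w i ^ (1 - q) * α i ^ q := by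
      rw [rpow_sub hW, rpow_one]
      ring

theorem rpow_sum_le_sum_rpow_mul_rpow_of_sum_eq_one (hw : ∀ i ∈ s, 0 < w i) (hs : s.Nonempty)
    (hα : ∀ i ∈ s, 0 ≤ α i) (hα₁ : ∑ i ∈ s, α i = 1) (hq : 1 ≤ q) :
    (∑ i ∈ s, w i) ^ (1 - q) ≤ ∑ i ∈ s, w i ^ (1 - q) * α i ^ q := by
  have hW : 0 < ∑ i ∈ s, w i := sum_pos hw hs
  have h := rpow_sum_le_rpow_sum_mul_sum_rpow_mul_rpow hw hα hq
  rw [hα₁, one_rpow, ← div_le_iff₀' (rpow_pos_of_pos hW _), one_div, ← rpow_neg hW.le,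
    neg_sub] at h
  exact h

theorem sum_rpow_mul_rpow_div_sum (hw : ∀ i ∈ s, 0 < w i) (hs : s.Nonempty) :
    ∑ i ∈ s, w i ^ (1 - q) * (w i / ∑ j ∈ s, w j) ^ q = (∑ i ∈ s, w i) ^ (1 - q) := by
  set W := ∑ i ∈ s, w i
  have hW : 0 < W := sum_pos hw hs
  have hterm : ∀ i ∈ s, w i ^ (1 - q) * (w i / W) ^ q = w i / W ^ q := by
    intro i hi
    rw [div_rpow (hw i hi).le hW.le, mul_div_assoc', ← rpow_add (hw i hi), sub_add_cancel,
      rpow_one]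
  rw [sum_congr rfl hterm, ← sum_div, rpow_sub hW, rpow_one]

end Real

/-- For c₁,…,c_r > 0 and p ≥ 1, the infimum of ∑ᵢ cᵢ^{1/(2p+1)} αᵢ^{2−1/(2p+1)} over
the probability simplex is achieved at αᵢ* = cᵢ^{−1/(2p)}/∑ⱼ cⱼ^{−1/(2p)}, with minimal
value (∑ⱼ cⱼ^{−1/(2p)})^{1/(2p+1)−1}. -/
theorem stmt16 (r : ℕ) (hr : 0 < r) (c : Fin r → ℝ) (hc : ∀ i, 0 < c i)
    (p : ℕ) (hp : 1 ≤ p) :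
    (∀ i, 0 ≤ c i ^ (-(1 : ℝ) / (2 * p)) / ∑ j, c j ^ (-(1 : ℝ) / (2 * p))) ∧
    (∑ i, c i ^ (-(1 : ℝ) / (2 * p)) / ∑ j, c j ^ (-(1 : ℝ) / (2 * p))) = 1 ∧
    (∑ i, c i ^ ((1 : ℝ) / (2 * p + 1)) *
        (c i ^ (-(1 : ℝ) / (2 * p)) / ∑ j, c j ^ (-(1 : ℝ) / (2 * p)))
          ^ (2 - (1 : ℝ) / (2 * p + 1)))
      = (∑ j, c j ^ (-(1 : ℝ) / (2 * p))) ^ ((1 : ℝ) / (2 * p + 1) - 1) ∧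
    ∀ α : Fin r → ℝ, (∀ i, 0 ≤ α i) → (∑ i, α i = 1) →
      (∑ j, c j ^ (-(1 : ℝ) / (2 * p))) ^ ((1 : ℝ) / (2 * p + 1) - 1) ≤
        ∑ i, c i ^ ((1 : ℝ) / (2 * p + 1)) * α i ^ (2 - (1 : ℝ) / (2 * p + 1)) := by
  have hp' : (1 : ℝ) ≤ p := by exact_mod_cast hp
  have hne : (univ : Finset (Fin r)).Nonempty := univ_nonempty_iff.mpr (Fin.pos_iff_nonempty.mp hr)
  have hw : ∀ i ∈ univ, 0 < c i ^ (-(1 : ℝ) / (2 * p)) := fun i _ => rpow_pos_of_pos (hc i) _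
  have hW : 0 < ∑ j, c j ^ (-(1 : ℝ) / (2 * p)) := sum_pos hw hne
  have hq : 1 ≤ 2 - (1 : ℝ) / (2 * p + 1) := by
    rw [le_sub_comm, div_le_iff₀ (by positivity)]
    linarith
  have hexp : (1 : ℝ) / (2 * p + 1) - 1 = 1 - (2 - (1 : ℝ) / (2 * p + 1)) := by ring
  have hweight : ∀ i, c i ^ ((1 : ℝ) / (2 * p + 1))
      = (c i ^ (-(1 : ℝ) / (2 * p))) ^ (1 - (2 - (1 : ℝ) / (2 * p + 1))) := by
    intro i
    rw [← rpow_mul (hc i).le]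
    congr 1
    field_simp
    ring
  simp only [hweight, hexp]
  refine ⟨fun i => div_nonneg (hw i (mem_univ i)).le hW.le, ?_,
    sum_rpow_mul_rpow_div_sum hw hne,
    fun α hα hα₁ => rpow_sum_le_sum_rpow_mul_rpow_of_sum_eq_one hw hne (fun i _ => hα i) hα₁ hq⟩
  rw [← sum_div, div_self hW.ne']
end
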